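/- arXiv:2305.15205 — 2 statements merged into one kernel-verified Lean document; each statement's English description precedes it below -/
import Mathlib

section
/- For a real sequence $x_0, x_1, \dots, x_n$ with $n \ge 2$, equality $\sum_{k=0}^{n-2} (x_{k+2} - 2x_{k+1} + x_k)^2 = 4 \sum_{k=0}^{n-1}(x_{k+1} - x_k)^2$ holds if and only if $x_0 = x_1 = \cdots = x_n$. -/
lemma key_identity (d : ℕ → ℝ) (m : ℕ) :
    4 * ∑ k ∈ Finset.range (m + 1), d k ^ 2
      = (∑ k ∈ Finset.range m, (d (k + 1) - d k) ^ 2)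
        + (∑ k ∈ Finset.range m, (d (k + 1) + d k) ^ 2)
        + 2 * d 0 ^ 2 + 2 * d m ^ 2 := by
  induction m with
  | zero => simp; ring
  | succ m ih =>
      rw [Finset.sum_range_succ (f := fun k => d k ^ 2),
        Finset.sum_range_succ (f := fun k => (d (k + 1) - d k) ^ 2),
        Finset.sum_range_succ (f := fun k => (d (k + 1) + d k) ^ 2)]
      nlinarith [ih]

/-- For a real sequence `x₀, …, xₙ` with `n ≥ 2`, equality
`∑_{k=0}^{n-2} (x_{k+2} - 2x_{k+1} + x_k)² = 4 ∑_{k=0}^{n-1} (x_{k+1} - x_k)²`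
holds if and only if `x₀ = x₁ = ⋯ = xₙ`. -/
theorem stmt5 (n : ℕ) (hn : 2 ≤ n) (x : ℕ → ℝ) :
    (∑ k ∈ Finset.range (n - 1), (x (k + 2) - 2 * x (k + 1) + x k) ^ 2
        = 4 * ∑ k ∈ Finset.range n, (x (k + 1) - x k) ^ 2)
      ↔ ∀ k ≤ n, x k = x 0 := by
  obtain ⟨m, rfl⟩ : ∃ m, n = m + 1 := ⟨n - 1, by omega⟩
  set d : ℕ → ℝ := fun k => x (k + 1) - x k with hd
  have hsd : ∀ k, x (k + 2) - 2 * x (k + 1) + x k = d (k + 1) - d k := by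
    intro k; simp [hd]; ring
  have hm : m + 1 - 1 = m := by omega
  constructor
  · intro h
    rw [hm] at h
    simp only [hsd] at h
    have hkey := key_identity d m
    rw [← h] at hkey
    have hS : (∑ k ∈ Finset.range m, (d (k + 1) + d k) ^ 2)
        + 2 * d 0 ^ 2 + 2 * d m ^ 2 = 0 := by linarith
    have hS1 : ∑ k ∈ Finset.range m, (d (k + 1) + d k) ^ 2 ≥ 0 :=
      Finset.sum_nonneg fun k _ => sq_nonneg _
    have hd0 : d 0 = 0 := by nlinarith [sq_nonneg (d 0), sq_nonneg (d m)]
    have hS0 : ∑ k ∈ Finset.range m, (d (k + 1) + d k) ^ 2 = 0 := by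
      nlinarith [sq_nonneg (d 0), sq_nonneg (d m)]
    have hterm : ∀ k < m, d (k + 1) + d k = 0 := by
      intro k hk
      have := (Finset.sum_eq_zero_iff_of_nonneg
        (fun i _ => sq_nonneg (d (i + 1) + d i))).mp hS0 k (Finset.mem_range.mpr hk)
      exact pow_eq_zero_iff (n := 2) (by norm_num) |>.mp this
    have hdz : ∀ k ≤ m, d k = 0 := by
      intro k hk
      induction k with
      | zero => exact hd0
      | succ k ih =>
          have hk' : k < m := by omega
          have := hterm k hk'
          have := ih (by omega)
          linarith
    intro k hk
    induction k with
    | zero => rfl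
    | succ k ih =>
        have hxk := ih (by omega)
        have := hdz k (by omega)
        simp only [hd] at this
        linarith
  · intro h
    have hz : ∀ k ≤ m, d k = 0 := by
      intro k hk
      simp only [hd]
      rw [h (k + 1) (by omega), h k (by omega)]
      ring
    rw [hm]
    simp only [hsd]
    rw [Finset.sum_eq_zero, Finset.sum_eq_zero]
    · ring
    · intro k hk
      have hkm : k < m + 1 := Finset.mem_range.mp hk
      rw [h (k + 1) (by omega), h k (by omega)]; ring
    · intro k hk
      have hkm : k < m := Finset.mem_range.mp hk
      rw [hz (k + 1) (by omega), hz k (by omega)]; ring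
end

section
/- Let $g : [0,T] \to \mathbb{R}$ be continuous, $x_0 > 0$, $a > 0$, and for $\varepsilon > 0$ let $x_\varepsilon$ be the (unique) continuous solution of $x_\varepsilon(t) = x_0 + \int_0^t \frac{a}{x_\varepsilon(s)\mathbf{1}_{\{x_\varepsilon(s) > 0\}} + \varepsilon}\,ds + g(t)$. Then for $0 < \varepsilon_1 < \varepsilon_2$, one has $x_{\varepsilon_1}(t) \ge x_{\varepsilon_2}(t)$ for all $t \in [0,T]$. -/
open Set intervalIntegral

/-- Comparison of solutions: if `x_ε` solves
`x_ε(t) = x₀ + ∫₀ᵗ a / (x_ε(s) 𝟙_{x_ε(s) > 0} + ε) ds + g(t)` for `ε = ε₁ < ε₂`,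
then `x_{ε₁}(t) ≥ x_{ε₂}(t)` on `[0,T]`. -/
theorem stmt9 (T : ℝ) (hT : 0 < T) (g : ℝ → ℝ) (hg : ContinuousOn g (Icc 0 T))
    (x0 a : ℝ) (hx0 : 0 < x0) (ha : 0 < a)
    (e1 e2 : ℝ) (he1 : 0 < e1) (he12 : e1 < e2)
    (x1 x2 : ℝ → ℝ)
    (hx1c : ContinuousOn x1 (Icc 0 T)) (hx2c : ContinuousOn x2 (Icc 0 T))
    (hx1 : ∀ t ∈ Icc 0 T,
      x1 t = x0 + (∫ s in (0 : ℝ)..t, a / ((if 0 < x1 s then x1 s else 0) + e1)) + g t)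
    (hx2 : ∀ t ∈ Icc 0 T,
      x2 t = x0 + (∫ s in (0 : ℝ)..t, a / ((if 0 < x2 s then x2 s else 0) + e2)) + g t) :
    ∀ t ∈ Icc 0 T, x2 t ≤ x1 t := by
  have hifmax : ∀ y : ℝ, (if 0 < y then y else 0) = max y 0 := by
    intro y; split_ifs with h
    · exact (max_eq_left h.le).symm
    · exact (max_eq_right (not_lt.mp h)).symm
  simp only [hifmax] at hx1 hx2
  set F1 : ℝ → ℝ := fun s => a / (max (x1 s) 0 + e1) with hF1
  set F2 : ℝ → ℝ := fun s => a / (max (x2 s) 0 + e2) with hF2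
  have hd1 : ∀ s, (0:ℝ) < max (x1 s) 0 + e1 := fun s =>
    add_pos_of_nonneg_of_pos (le_max_right _ _) he1
  have hd2 : ∀ s, (0:ℝ) < max (x2 s) 0 + e2 := fun s =>
    add_pos_of_nonneg_of_pos (le_max_right _ _) (he1.trans he12)
  have hF1c : ContinuousOn F1 (Icc 0 T) :=
    continuousOn_const.div ((hx1c.sup continuousOn_const).add continuousOn_const)
      (fun s _ => (hd1 s).ne')
  have hF2c : ContinuousOn F2 (Icc 0 T) :=
    continuousOn_const.div ((hx2c.sup continuousOn_const).add continuousOn_const)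
      (fun s _ => (hd2 s).ne')
  have hint1 : ∀ u v : ℝ, u ∈ Icc 0 T → v ∈ Icc 0 T →
      IntervalIntegrable F1 MeasureTheory.volume u v := by
    intro u v hu hv
    apply ContinuousOn.intervalIntegrable
    apply hF1c.mono
    have hu' : u ∈ uIcc (0:ℝ) T := by rw [uIcc_of_le hT.le]; exact hu
    have hv' : v ∈ uIcc (0:ℝ) T := by rw [uIcc_of_le hT.le]; exact hv
    exact (uIcc_subset_uIcc hu' hv').trans (by rw [uIcc_of_le hT.le])
  have hint2 : ∀ u v : ℝ, u ∈ Icc 0 T → v ∈ Icc 0 T →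
      IntervalIntegrable F2 MeasureTheory.volume u v := by
    intro u v hu hv
    apply ContinuousOn.intervalIntegrable
    apply hF2c.mono
    have hu' : u ∈ uIcc (0:ℝ) T := by rw [uIcc_of_le hT.le]; exact hu
    have hv' : v ∈ uIcc (0:ℝ) T := by rw [uIcc_of_le hT.le]; exact hv
    exact (uIcc_subset_uIcc hu' hv').trans (by rw [uIcc_of_le hT.le])
  have h0T : (0:ℝ) ∈ Icc (0:ℝ) T := left_mem_Icc.mpr hT.le
  have key : ∀ t ∈ Icc (0:ℝ) T, x1 t - x2 t = ∫ s in (0:ℝ)..t, (F1 s - F2 s) := by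
    intro t ht
    rw [intervalIntegral.integral_sub (hint1 0 t h0T ht) (hint2 0 t h0T ht),
      hx1 t ht, hx2 t ht]
    ring
  intro t ht
  by_contra hlt
  push_neg at hlt
  set D : ℝ → ℝ := fun s => x1 s - x2 s with hD
  have hDc : ContinuousOn D (Icc 0 T) := hx1c.sub hx2c
  have hD0 : D 0 = 0 := by
    simp only [hD]
    rw [key 0 h0T, intervalIntegral.integral_same]
  set S : Set ℝ := Icc 0 t ∩ D ⁻¹' {0} with hS
  have hSclosed : IsClosed S :=
    (hDc.mono (Icc_subset_Icc le_rfl ht.2)).preimage_isClosed_of_isClosed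
      isClosed_Icc isClosed_singleton
  have hScpt : IsCompact S := isCompact_Icc.of_isClosed_subset hSclosed inter_subset_left
  have hSne : S.Nonempty := ⟨0, ⟨le_rfl, ht.1⟩, hD0⟩
  have ht0S : sSup S ∈ S := hScpt.sSup_mem hSne
  set t0 := sSup S with ht0def
  obtain ⟨⟨ht00, ht0t⟩, hDt0⟩ := ht0S
  have hDt0' : D t0 = 0 := hDt0
  have hDt : D t < 0 := sub_neg.mpr hlt
  have ht0lt : t0 < t :=
    ht0t.lt_of_ne (fun h => absurd (h ▸ hDt0') hDt.ne)
  have hneg : ∀ s ∈ Ioc t0 t, D s < 0 := by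
    intro s hs
    by_contra hge
    push_neg at hge
    have h0s : (0:ℝ) ≤ s := ht00.trans hs.1.le
    have hcs : ContinuousOn D (Icc s t) := hDc.mono (Icc_subset_Icc h0s ht.2)
    have h0mem : (0:ℝ) ∈ Icc (D t) (D s) := ⟨hDt.le, hge⟩
    obtain ⟨c, hc, hDc0⟩ := intermediate_value_Icc' hs.2 hcs h0mem
    have hcS : c ∈ S := ⟨⟨h0s.trans hc.1, hc.2⟩, hDc0⟩
    have hct0 : c ≤ t0 := le_csSup hScpt.bddAbove hcS
    exact absurd hct0 (not_le.mpr (lt_of_lt_of_le hs.1 hc.1))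
  have hle : ∀ s ∈ Icc t0 t, x1 s ≤ x2 s := by
    intro s hs
    rcases eq_or_lt_of_le hs.1 with h|h
    · rw [← h]
      exact le_of_eq (sub_eq_zero.mp hDt0')
    · exact le_of_lt (sub_neg.mp (hneg s ⟨h, hs.2⟩))
  have hFpos : ∀ s ∈ Icc t0 t, 0 < F1 s - F2 s := by
    intro s hs
    have h1 : max (x1 s) 0 + e1 < max (x2 s) 0 + e2 :=
      add_lt_add_of_le_of_lt (max_le_max (hle s hs) le_rfl) he12
    have h2 := div_lt_div_of_pos_left ha (hd1 s) h1
    simpa [hF1, hF2, sub_pos] using h2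
  have ht0T : t0 ∈ Icc (0:ℝ) T := ⟨ht00, ht0t.trans ht.2⟩
  have hintsub : IntervalIntegrable (fun s => F1 s - F2 s) MeasureTheory.volume t0 t :=
    (hint1 t0 t ht0T ht).sub (hint2 t0 t ht0T ht)
  have hIpos : 0 < ∫ s in t0..t, (F1 s - F2 s) :=
    intervalIntegral.intervalIntegral_pos_of_pos_on hintsub
      (fun s hs => hFpos s ⟨hs.1.le, hs.2.le⟩) ht0lt
  have hsplit : (∫ s in (0:ℝ)..t, (F1 s - F2 s)) - (∫ s in (0:ℝ)..t0, (F1 s - F2 s))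
      = ∫ s in t0..t, (F1 s - F2 s) :=
    intervalIntegral.integral_interval_sub_left
      ((hint1 0 t h0T ht).sub (hint2 0 t h0T ht))
      ((hint1 0 t0 h0T ht0T).sub (hint2 0 t0 h0T ht0T))
  have e1' : D t = ∫ s in (0:ℝ)..t, (F1 s - F2 s) := key t ht
  have e2' : D t0 = ∫ s in (0:ℝ)..t0, (F1 s - F2 s) := key t0 ht0T
  linarith [hDt, e1', e2', hsplit, hIpos, hDt0']
end
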